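/- Let λ ∈ Γ_k with λ_1 ≥ ... ≥ λ_n and suppose λ_1 > 0. Then σ_{k-1}(λ|1) > 0, and moreover σ_{k-1}(λ|1) ≥ (k/(n λ_1)) σ_k(λ), so that the first diagonal coefficient F^{11} = σ_{k-1}(λ|1) satisfies F^{11} λ_1² ≥ (k/n) σ_k(λ) λ_1. -/
import Mathlib


open Finset

/-- The k-th elementary symmetric polynomial of λ ∈ ℝⁿ. -/
noncomputable def esymm (n k : ℕ) (lam : Fin n → ℝ) : ℝ :=
  ∑ s ∈ Finset.powersetCard k (Finset.univ : Finset (Fin n)), ∏ i ∈ s, lam i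

/-- The Garding cone Γ_k. -/
def GammaCone (n k : ℕ) : Set (Fin n → ℝ) :=
  {lam | ∀ j, 1 ≤ j → j ≤ k → 0 < esymm n j lam}

lemma esymm_zero' (n : ℕ) (x : Fin n → ℝ) : esymm n 0 x = 1 := by
  simp [esymm]

lemma esymm_update (n j : ℕ) (x : Fin n → ℝ) (i : Fin n) :
    esymm n j (Function.update x i 0) =
      ∑ S ∈ (Finset.powersetCard j (Finset.univ : Finset (Fin n))).filter (fun S => i ∉ S),
        ∏ l ∈ S, x l := by
  rw [esymm, ← Finset.sum_filter_add_sum_filter_not _ (fun S => i ∉ S)]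
  have h1 : ∀ S ∈ (Finset.powersetCard j (Finset.univ : Finset (Fin n))).filter (fun S => i ∉ S),
      (∏ l ∈ S, Function.update x i 0 l) = ∏ l ∈ S, x l := by
    intro S hS
    rcases Finset.mem_filter.mp hS with ⟨-, hi⟩
    exact Finset.prod_congr rfl fun l hl => Function.update_of_ne (by rintro rfl; exact hi hl) _ _
  have h2 : ∀ S ∈ (Finset.powersetCard j (Finset.univ : Finset (Fin n))).filter (fun S => ¬ i ∉ S),
      (∏ l ∈ S, Function.update x i 0 l) = 0 := by
    intro S hS
    rcases Finset.mem_filter.mp hS with ⟨-, hi⟩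
    exact Finset.prod_eq_zero (not_not.mp hi) (Function.update_self i 0 x)
  rw [Finset.sum_congr rfl h1, Finset.sum_congr rfl h2]
  simp

lemma esymm_split (n j : ℕ) (hj : 1 ≤ j) (x : Fin n → ℝ) (i : Fin n) :
    esymm n j x = esymm n j (Function.update x i 0)
      + x i * esymm n (j - 1) (Function.update x i 0) := by
  rw [esymm, ← Finset.sum_filter_add_sum_filter_not _ (fun S => i ∉ S), esymm_update, esymm_update]
  congr 1
  rw [Finset.mul_sum]
  refine Finset.sum_bij' (fun S _ => S.erase i) (fun T _ => insert i T) ?_ ?_ ?_ ?_ ?_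
  · intro S hS
    rcases Finset.mem_filter.mp hS with ⟨hS1, hS2⟩
    rcases Finset.mem_powersetCard.mp hS1 with ⟨-, hcard⟩
    refine Finset.mem_filter.mpr ⟨Finset.mem_powersetCard.mpr ⟨Finset.subset_univ _, ?_⟩,
      Finset.notMem_erase _ _⟩
    rw [Finset.card_erase_of_mem (not_not.mp hS2), hcard]
  · intro T hT
    rcases Finset.mem_filter.mp hT with ⟨hT1, hT2⟩
    rcases Finset.mem_powersetCard.mp hT1 with ⟨-, hcard⟩
    refine Finset.mem_filter.mpr ⟨Finset.mem_powersetCard.mpr ⟨Finset.subset_univ _, ?_⟩, ?_⟩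
    · rw [Finset.card_insert_of_notMem hT2, hcard]; omega
    · simp
  · intro S hS
    rcases Finset.mem_filter.mp hS with ⟨-, hS2⟩
    exact Finset.insert_erase (not_not.mp hS2)
  · intro T hT
    rcases Finset.mem_filter.mp hT with ⟨-, hT2⟩
    exact Finset.erase_insert hT2
  · intro S hS
    rcases Finset.mem_filter.mp hS with ⟨-, hS2⟩
    exact (Finset.mul_prod_erase S x (not_not.mp hS2)).symm

lemma esymm_sum_update (n j : ℕ) (x : Fin n → ℝ) :
    ∑ i : Fin n, esymm n j (Function.update x i 0) = (n - j : ℕ) * esymm n j x := by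
  classical
  simp_rw [esymm_update, Finset.sum_filter]
  rw [Finset.sum_comm]
  rw [esymm, Finset.mul_sum]
  refine Finset.sum_congr rfl fun S hS => ?_
  rw [← Finset.sum_filter, Finset.sum_const, nsmul_eq_mul]
  congr 1
  have hcard : S.card = j := (Finset.mem_powersetCard.mp hS).2
  have : (Finset.univ.filter (fun i => i ∉ S)) = Sᶜ := by
    ext i; simp [Finset.mem_compl]
  rw [this, Finset.card_compl, hcard]
  simp

lemma esymm_weighted_sum (n k : ℕ) (hk : 1 ≤ k) (hkn : k ≤ n) (x : Fin n → ℝ) :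
    ∑ i : Fin n, x i * esymm n (k - 1) (Function.update x i 0) = k * esymm n k x := by
  have h := fun i : Fin n => esymm_split n k hk x i
  have hsum : ∑ i : Fin n, esymm n k x =
      (∑ i : Fin n, esymm n k (Function.update x i 0))
      + ∑ i : Fin n, x i * esymm n (k - 1) (Function.update x i 0) := by
    rw [← Finset.sum_add_distrib]
    exact Finset.sum_congr rfl fun i _ => h i
  rw [Finset.sum_const, esymm_sum_update, Finset.card_univ, Fintype.card_fin,
    nsmul_eq_mul] at hsum
  have hc : ((n - k : ℕ) : ℝ) = (n : ℝ) - k := by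
    rw [Nat.cast_sub hkn]
  rw [hc] at hsum
  linarith [hsum]

lemma esymm_top_vanish (m : ℕ) (hm : 1 ≤ m) (x : Fin m → ℝ) (i : Fin m) :
    esymm m m (Function.update x i 0) = 0 := by
  rw [esymm_update]
  rw [Finset.sum_eq_zero]
  intro S hS
  rcases Finset.mem_filter.mp hS with ⟨hS1, hS2⟩
  rcases Finset.mem_powersetCard.mp hS1 with ⟨hsub, hcard⟩
  exfalso
  have : S = Finset.univ := Finset.eq_univ_of_card S (by rw [hcard]; simp)
  exact hS2 (this ▸ Finset.mem_univ i)

lemma newton_top (m : ℕ) (hm : 2 ≤ m) (x : Fin m → ℝ) :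
    2 * (m : ℝ) * (esymm m m x * esymm m (m - 2) x) ≤
      ((m : ℝ) - 1) * (esymm m (m - 1) x) ^ 2 := by
  set Q : Fin m → ℝ := fun i => esymm m (m - 1) (Function.update x i 0) with hQ
  set R : Fin m → ℝ := fun i => esymm m (m - 2) (Function.update x i 0) with hR
  have f1 : ∑ i : Fin m, Q i = esymm m (m - 1) x := by
    rw [hQ, esymm_sum_update]
    have : m - (m - 1) = 1 := by omega
    rw [this]; simp
  have f2 : ∀ i, x i * Q i = esymm m m x := by
    intro i
    have := esymm_split m m (by omega) x i
    rw [esymm_top_vanish m (by omega) x i] at this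
    linarith [this]
  have f3 : ∀ i, esymm m (m - 1) x = Q i + x i * R i := by
    intro i
    have := esymm_split m (m - 1) (by omega) x i
    have h2 : m - 1 - 1 = m - 2 := by omega
    rw [h2] at this
    exact this
  have f4 : ∑ i : Fin m, R i = 2 * esymm m (m - 2) x := by
    rw [hR, esymm_sum_update]
    have : m - (m - 2) = 2 := by omega
    rw [this]; simp
  have key : (esymm m (m - 1) x) ^ 2 =
      (∑ i : Fin m, (Q i) ^ 2) + esymm m m x * (2 * esymm m (m - 2) x) := by
    have : ∀ i : Fin m, Q i * esymm m (m - 1) x = (Q i) ^ 2 + esymm m m x * R i := by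
      intro i
      have h4 : Q i * esymm m (m - 1) x = (Q i) ^ 2 + (x i * Q i) * R i := by
        rw [f3 i]; ring
      rw [f2 i] at h4
      exact h4
    calc (esymm m (m - 1) x) ^ 2 = ∑ i : Fin m, Q i * esymm m (m - 1) x := by
          rw [← Finset.sum_mul, f1]; ring
      _ = ∑ i : Fin m, ((Q i) ^ 2 + esymm m m x * R i) := Finset.sum_congr rfl fun i _ => this i
      _ = (∑ i : Fin m, (Q i) ^ 2) + esymm m m x * (2 * esymm m (m - 2) x) := by
          rw [Finset.sum_add_distrib, ← Finset.mul_sum, f4]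
  have cs : (∑ i : Fin m, Q i) ^ 2 ≤ (m : ℝ) * ∑ i : Fin m, (Q i) ^ 2 := by
    have := sq_sum_le_card_mul_sum_sq (s := (Finset.univ : Finset (Fin m))) (f := Q)
    simpa using this
  rw [f1] at cs
  nlinarith [cs, key, hm]

lemma esymm_eq_mset (n k : ℕ) (x : Fin n → ℝ) :
    esymm n k x = (Multiset.map x Finset.univ.val).esymm k :=
  (Finset.esymm_map_val x Finset.univ k).symm

lemma exists_fun_of_card (s : Multiset ℝ) (m : ℕ) (h : Multiset.card s = m) :
    ∃ y : Fin m → ℝ, Multiset.map y Finset.univ.val = s := by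
  subst h
  refine ⟨fun i => s.toList.get (Fin.cast (Multiset.length_toList s).symm i), ?_⟩
  have h1 : (Finset.univ.val : Multiset (Fin (Multiset.card s)))
      = ↑(List.finRange (Multiset.card s)) := rfl
  rw [h1, Multiset.map_coe, ← List.ofFn_eq_map]
  conv_rhs => rw [← Multiset.coe_toList s]
  congr 1
  apply List.ext_get
  · simp
  · intro i h1 h2
    simp

open Polynomial in
lemma deriv_esymm_transfer (n : ℕ) (hn : 2 ≤ n) (s : Multiset ℝ) (hs : Multiset.card s = n) :
    ∃ t : Multiset ℝ, Multiset.card t = n - 1 ∧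
      ∀ j, j ≤ n - 1 → (n : ℝ) * t.esymm j = ((n - j : ℕ) : ℝ) * s.esymm j := by
  set p := (s.map fun r => X - C r).prod with hp
  have hmonic : p.Monic :=
    monic_multiset_prod_of_monic _ _ (fun a _ => monic_X_sub_C _)
  have hdeg : p.natDegree = n := by
    rw [hp, natDegree_multiset_prod_X_sub_C_eq_card, hs]
  have hroots : p.roots = s := roots_multiset_prod_X_sub_C s
  set dp := derivative p with hdp
  have hco : dp.coeff (n - 1) = (n : ℝ) := by
    rw [hdp, coeff_derivative, show n - 1 + 1 = n from by omega, ← hdeg,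
      hmonic.coeff_natDegree, hdeg, one_mul]
    rw [Nat.cast_sub (by omega)]
    push_cast
    ring
  have hdpdeg : dp.natDegree = n - 1 := by
    refine le_antisymm ?_ (le_natDegree_of_ne_zero (by rw [hco]; positivity))
    have := natDegree_derivative_le p
    rw [← hdp] at this
    omega
  have hcard : Multiset.card dp.roots = n - 1 := by
    have h1 : Multiset.card dp.roots ≤ n - 1 := hdpdeg ▸ dp.card_roots'
    have h2 := p.card_roots_le_derivative
    rw [← hdp, hroots, hs] at h2
    omega
  refine ⟨dp.roots, hcard, ?_⟩
  intro j hj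
  have lead : dp.leadingCoeff = (n : ℝ) := by
    rw [Polynomial.leadingCoeff, hdpdeg, hco]
  have fact := C_leadingCoeff_mul_prod_multiset_X_sub_C (p := dp) (hcard.trans hdpdeg.symm)
  have e1 : dp.coeff (n - 1 - j) = ((n - j : ℕ) : ℝ) * ((-1 : ℝ) ^ j * s.esymm j) := by
    rw [hdp, coeff_derivative, show n - 1 - j + 1 = n - j from by omega]
    have hc := Multiset.prod_X_sub_C_coeff s (k := n - j) (by omega)
    rw [hs, show n - (n - j) = j from by omega] at hc
    rw [← hp] at hc
    rw [hc, Nat.cast_sub (by omega : j ≤ n),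
      show n - 1 - j = n - (j + 1) from by omega,
      Nat.cast_sub (by omega : j + 1 ≤ n)]
    push_cast
    ring
  have e2 : dp.coeff (n - 1 - j) = (n : ℝ) * ((-1 : ℝ) ^ j * dp.roots.esymm j) := by
    conv_lhs => rw [← fact]
    rw [coeff_C_mul, lead]
    have hc := Multiset.prod_X_sub_C_coeff dp.roots (k := n - 1 - j) (by omega)
    rw [hcard, show n - 1 - (n - 1 - j) = j from by omega] at hc
    rw [hc]
  have h3 : (-1 : ℝ) ^ j ≠ 0 := pow_ne_zero _ (by norm_num)
  have hcomb := e1.symm.trans e2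
  have : (-1 : ℝ) ^ j * (((n - j : ℕ) : ℝ) * s.esymm j)
      = (-1 : ℝ) ^ j * ((n : ℝ) * dp.roots.esymm j) := by
    linarith [hcomb]
  have := mul_left_cancel₀ h3 this
  linarith [this]

lemma choose_transfer (m j : ℕ) : (m + 1) * m.choose j = (m + 1 - j) * (m + 1).choose j := by
  rw [Nat.add_one_mul_choose_eq, Nat.choose_succ_right_eq]
  ring

theorem newton_ineq (n : ℕ) (x : Fin n → ℝ) (i : ℕ) (h : i + 2 ≤ n) :
    esymm n (i + 2) x * esymm n i x * ((n.choose (i + 1) : ℝ)) ^ 2 ≤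
      (esymm n (i + 1) x) ^ 2 * (n.choose (i + 2) : ℝ) * (n.choose i : ℝ) := by
  induction n generalizing i with
  | zero => omega
  | succ m ih =>
    rcases eq_or_lt_of_le h with htop | hlt
    · -- top case : i + 2 = m + 1
      have hm1 : 1 ≤ m := by omega
      rw [show i + 2 = m + 1 from htop, show i + 1 = m from by omega,
        show i = m - 1 from by omega]
      have ht := newton_top (m + 1) (by omega) x
      rw [show m + 1 - 2 = m - 1 from by omega, show m + 1 - 1 = m from by omega] at ht
      have hch : ((m + 1).choose (m - 1)) = ((m + 1).choose 2) := by
        rw [show m - 1 = m + 1 - 2 from by omega]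
        exact Nat.choose_symm (by omega)
      rw [Nat.choose_succ_self_right, Nat.choose_self, hch, Nat.cast_choose_two]
      push_cast at ht ⊢
      nlinarith [ht, (by positivity : (0:ℝ) ≤ (m : ℝ) + 1)]
    · -- step case : i + 2 ≤ m
      have hi2 : i + 2 ≤ m := by omega
      set s : Multiset ℝ := Multiset.map x Finset.univ.val with hsdef
      have hs : Multiset.card s = m + 1 := by simp [hsdef]
      obtain ⟨t, hcard, htrans⟩ := deriv_esymm_transfer (m + 1) (by omega) s hs
      rw [show m + 1 - 1 = m from rfl] at hcard htrans
      obtain ⟨y, hy⟩ := exists_fun_of_card t m hcard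
      have hEy : ∀ j, esymm m j y = t.esymm j := fun j => by
        rw [esymm_eq_mset, hy]
      have hEx : ∀ j, esymm (m + 1) j x = s.esymm j := fun j => esymm_eq_mset _ j x
      have H : ∀ j, j ≤ m → ((m + 1 : ℕ) : ℝ) * esymm m j y
          = ((m + 1 - j : ℕ) : ℝ) * esymm (m + 1) j x := fun j hj => by
        rw [hEy, hEx]; exact htrans j hj
      have G : ∀ j, ((m + 1 : ℕ) : ℝ) * (m.choose j : ℝ)
          = ((m + 1 - j : ℕ) : ℝ) * ((m + 1).choose j : ℝ) := fun j => by
        exact_mod_cast congrArg (Nat.cast : ℕ → ℝ) (choose_transfer m j)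
      have ihy := ih y i (by omega)
      have hNpos : (0 : ℝ) < ((m + 1 : ℕ) : ℝ) := by positivity
      have c0pos : (0 : ℝ) < ((m + 1 - i : ℕ) : ℝ) := by
        have : 1 ≤ m + 1 - i := by omega
        exact_mod_cast Nat.cast_pos.mpr (by omega : 0 < m + 1 - i)
      have c1pos : (0 : ℝ) < ((m + 1 - (i + 1) : ℕ) : ℝ) :=
        Nat.cast_pos.mpr (by omega)
      have c2pos : (0 : ℝ) < ((m + 1 - (i + 2) : ℕ) : ℝ) :=
        Nat.cast_pos.mpr (by omega)
      set c0 := ((m + 1 - i : ℕ) : ℝ)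
      set c1 := ((m + 1 - (i + 1) : ℕ) : ℝ)
      set c2 := ((m + 1 - (i + 2) : ℕ) : ℝ)
      set N := ((m + 1 : ℕ) : ℝ)
      refine le_of_mul_le_mul_left ?_ (show (0:ℝ) < c0 * c1 ^ 2 * c2 by positivity)
      calc c0 * c1 ^ 2 * c2 *
            (esymm (m+1) (i+2) x * esymm (m+1) i x * (((m+1).choose (i+1) : ℝ)) ^ 2)
          = (c2 * esymm (m+1) (i+2) x) * (c0 * esymm (m+1) i x) *
              (c1 * (((m+1).choose (i+1) : ℝ))) ^ 2 := by ring
        _ = (N * esymm m (i+2) y) * (N * esymm m i y) * (N * ((m.choose (i+1) : ℝ))) ^ 2 := by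
            rw [← H (i+2) (by omega), ← H i (by omega), ← G (i+1)]
        _ = N ^ 4 * (esymm m (i+2) y * esymm m i y * ((m.choose (i+1) : ℝ)) ^ 2) := by ring
        _ ≤ N ^ 4 * ((esymm m (i+1) y) ^ 2 * (m.choose (i+2) : ℝ) * (m.choose i : ℝ)) := by
            exact mul_le_mul_of_nonneg_left ihy (by positivity)
        _ = (N * esymm m (i+1) y) ^ 2 * (N * (m.choose (i+2) : ℝ)) * (N * (m.choose i : ℝ)) := by
            ring
        _ = (c1 * esymm (m+1) (i+1) x) ^ 2 * (c2 * (((m+1).choose (i+2) : ℝ))) *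
              (c0 * (((m+1).choose i : ℝ))) := by
            rw [H (i+1) (by omega), G (i+2), G i]
        _ = c0 * c1 ^ 2 * c2 *
              ((esymm (m+1) (i+1) x) ^ 2 * (((m+1).choose (i+2) : ℝ)) * (((m+1).choose i : ℝ))) := by
            ring

lemma choose_logconcave (n r : ℕ) (hr : 1 ≤ r) :
    n.choose (r + 1) * n.choose (r - 1) ≤ n.choose r ^ 2 := by
  rcases le_or_gt r n with hrn | hrn
  · have h1 := Nat.choose_succ_right_eq n r
    have h2 := Nat.choose_succ_right_eq n (r - 1)
    rw [show r - 1 + 1 = r from by omega] at h2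
    have key : (n.choose (r + 1) * n.choose (r - 1)) * ((r + 1) * (n - r + 1))
        = (n.choose r ^ 2) * ((n - r) * r) := by
      rw [show n - r + 1 = n - (r - 1) from by omega]
      calc (n.choose (r + 1) * n.choose (r - 1)) * ((r + 1) * (n - (r - 1)))
          = (n.choose (r + 1) * (r + 1)) * (n.choose (r - 1) * (n - (r - 1))) := by ring
        _ = (n.choose r * (n - r)) * (n.choose (r - 1) * (n - (r - 1))) := by rw [h1]
        _ = (n.choose r * (n - r)) * (n.choose r * r) := by rw [← h2]
        _ = (n.choose r ^ 2) * ((n - r) * r) := by ring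
    have hfac : (n - r) * r ≤ (r + 1) * (n - r + 1) := by
      calc (n - r) * r ≤ (n - r + 1) * (r + 1) := Nat.mul_le_mul (by omega) (by omega)
        _ = (r + 1) * (n - r + 1) := Nat.mul_comm _ _
    have hle : (n.choose (r + 1) * n.choose (r - 1)) * ((r + 1) * (n - r + 1))
        ≤ n.choose r ^ 2 * ((r + 1) * (n - r + 1)) := by
      rw [key]
      exact Nat.mul_le_mul_left _ hfac
    exact Nat.le_of_mul_le_mul_right hle (by positivity)
  · have hz : n.choose (r + 1) = 0 := Nat.choose_eq_zero_of_lt (by omega)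
    simp [hz]

lemma esymm_update_pos : ∀ (k : ℕ), 1 ≤ k → ∀ (n : ℕ), k ≤ n → ∀ (x : Fin n → ℝ),
    (∀ j, 1 ≤ j → j ≤ k → 0 < esymm n j x) →
    ∀ i : Fin n, 0 < esymm n (k - 1) (Function.update x i 0) := by
  intro k
  induction k with
  | zero => omega
  | succ r ihr =>
    intro _ n hn x hx i
    rcases Nat.eq_zero_or_pos r with rfl | hr
    · rw [show 0 + 1 - 1 = 0 from rfl, esymm_zero']
      exact one_pos
    · rw [show r + 1 - 1 = r from rfl]
      have ha : 0 < esymm n (r - 1) (Function.update x i 0) :=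
        ihr hr n (by omega) x (fun j hj1 hj2 => hx j hj1 (by omega)) i
      set u := Function.update x i 0 with hu
      set a := esymm n (r - 1) u
      set b := esymm n r u with hb
      set c := esymm n (r + 1) u with hc
      set t := x i with htdef
      have hE1 : esymm n r x = b + t * a := esymm_split n r hr x i
      have hE2 : esymm n (r + 1) x = c + t * b := by
        have := esymm_split n (r + 1) (by omega) x i
        rw [show r + 1 - 1 = r from rfl] at this
        exact this
      have hE1pos : 0 < esymm n r x := hx r hr (by omega)
      have hE2pos : 0 < esymm n (r + 1) x := hx (r + 1) (by omega) le_rfl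
      rcases le_or_gt t 0 with ht | ht
      · nlinarith [hE1pos, mul_nonpos_of_nonpos_of_nonneg ht ha.le]
      · by_contra hble
        push_neg at hble
        have newton := newton_ineq n u (r - 1) (by omega)
        rw [show r - 1 + 2 = r + 1 from by omega, show r - 1 + 1 = r from by omega] at newton
        have hlc : ((n.choose (r + 1) : ℝ)) * ((n.choose (r - 1) : ℝ)) ≤ ((n.choose r : ℝ)) ^ 2 := by
          exact_mod_cast choose_logconcave n r hr
        have hCpos : (0 : ℝ) < (n.choose r : ℝ) :=
          Nat.cast_pos.mpr (Nat.choose_pos (by omega))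
        have hca : c * a ≤ b ^ 2 := by
          have h1 : c * a * ((n.choose r : ℝ)) ^ 2 ≤ b ^ 2 * ((n.choose r : ℝ)) ^ 2 := by
            calc c * a * ((n.choose r : ℝ)) ^ 2
                ≤ b ^ 2 * (n.choose (r + 1) : ℝ) * (n.choose (r - 1) : ℝ) := newton
              _ = b ^ 2 * ((n.choose (r + 1) : ℝ) * (n.choose (r - 1) : ℝ)) := by ring
              _ ≤ b ^ 2 * ((n.choose r : ℝ)) ^ 2 := by
                  exact mul_le_mul_of_nonneg_left hlc (by positivity)
          exact le_of_mul_le_mul_right h1 (by positivity)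
        rcases eq_or_lt_of_le hble with hbeq | hblt
        · rw [hE2, ← hbeq] at hE2pos
          nlinarith [hE2pos, ha, hca]
        · have h1 : 0 < (b + t * a) * (-b) := mul_pos (hE1 ▸ hE1pos) (by linarith)
          have h2 : 0 < (c + t * b) * a := mul_pos (hE2 ▸ hE2pos) ha
          nlinarith [h1, h2, hca]

/-- For λ ∈ Γ_k ordered decreasingly with λ_1 > 0: F^{11} = σ_{k-1}(λ|1) > 0,
σ_{k-1}(λ|1) ≥ (k/(n λ_1)) σ_k(λ), and F^{11} λ_1² ≥ (k/n) σ_k(λ) λ_1. -/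
theorem F11_bounds (n k : ℕ) (hn : 1 ≤ n) (hk1 : 1 ≤ k) (hkn : k ≤ n)
    (lam : Fin n → ℝ) (hlam : lam ∈ GammaCone n k) (hsort : Antitone lam)
    (hpos : 0 < lam ⟨0, by omega⟩) :
    0 < esymm n (k - 1) (Function.update lam (⟨0, by omega⟩ : Fin n) 0) ∧
    (k : ℝ) / ((n : ℝ) * lam ⟨0, by omega⟩) * esymm n k lam ≤
      esymm n (k - 1) (Function.update lam (⟨0, by omega⟩ : Fin n) 0) ∧
    (k : ℝ) / (n : ℝ) * esymm n k lam * lam ⟨0, by omega⟩ ≤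
      esymm n (k - 1) (Function.update lam (⟨0, by omega⟩ : Fin n) 0) *
        (lam ⟨0, by omega⟩) ^ 2 := by
  have hlam' : ∀ j, 1 ≤ j → j ≤ k → 0 < esymm n j lam := hlam
  set i0 : Fin n := ⟨0, by omega⟩ with hi0
  set t : ℝ := lam i0 with htdef
  set mu : Fin n → ℝ := Function.update lam i0 0 with hmu
  set E : ℝ := esymm n (k - 1) mu with hE
  have hEpos : 0 < E := esymm_update_pos k hk1 n hkn lam hlam' i0
  have hsplitk : esymm n k lam = esymm n k mu + t * E := esymm_split n k hk1 lam i0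
  have hekpos : 0 < esymm n k lam := hlam' k hk1 le_rfl
  have hkn' : (k : ℝ) ≤ (n : ℝ) := Nat.cast_le.mpr hkn
  have key : (k : ℝ) * esymm n k lam ≤ (n : ℝ) * (t * E) := by
    rcases le_or_gt (esymm n k mu) 0 with hA | hB
    · nlinarith [hsplitk, hekpos, hkn', hA]
    · -- mu is in Gamma_k
      have hmupos : ∀ j, 1 ≤ j → j ≤ k → 0 < esymm n j mu := by
        intro j hj1 hj2
        rcases eq_or_lt_of_le hj2 with rfl | hjk
        · exact hB
        · have := esymm_update_pos (j + 1) (by omega) n (by omega) lam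
            (fun l hl1 hl2 => hlam' l hl1 (by omega)) i0
          rw [show j + 1 - 1 = j from rfl] at this
          exact this
      have hEi : ∀ i : Fin n, 0 < esymm n (k - 1) (Function.update mu i 0) :=
        esymm_update_pos k hk1 n hkn mu hmupos
      have hsum : ∑ i : Fin n, mu i * esymm n (k - 1) (Function.update mu i 0)
          = k * esymm n k mu := esymm_weighted_sum n k hk1 hkn mu
      have hsumE : ∑ i : Fin n, esymm n (k - 1) (Function.update mu i 0)
          = ((n - (k - 1) : ℕ) : ℝ) * E := esymm_sum_update n (k - 1) mu
      have hupd : Function.update mu i0 0 = mu := by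
        rw [hmu]
        exact Function.update_idem 0 0 lam
      have hmu0 : mu i0 = 0 := by rw [hmu]; exact Function.update_self i0 0 lam
      have hle : ∀ i : Fin n, mu i ≤ t := by
        intro i
        by_cases hi : i = i0
        · rw [hi, hmu0]; exact le_of_lt hpos
        · have h1 : mu i = lam i := by
            rw [hmu]; exact Function.update_of_ne hi 0 lam
          have h2 : i0 ≤ i := by
            rw [Fin.le_def]; exact Nat.zero_le _
          rw [h1, htdef]; exact hsort h2
      have hdrop : ∑ i : Fin n, mu i * esymm n (k - 1) (Function.update mu i 0)
          = ∑ i ∈ Finset.univ.erase i0, mu i * esymm n (k - 1) (Function.update mu i 0) :=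
        (Finset.sum_erase _ (by rw [hmu0, zero_mul])).symm
      have hbound : ∑ i ∈ Finset.univ.erase i0, mu i * esymm n (k - 1) (Function.update mu i 0)
          ≤ ∑ i ∈ Finset.univ.erase i0, t * esymm n (k - 1) (Function.update mu i 0) :=
        Finset.sum_le_sum fun i _ => mul_le_mul_of_nonneg_right (hle i) (hEi i).le
      have hsplit2 : ∑ i : Fin n, t * esymm n (k - 1) (Function.update mu i 0)
          = t * esymm n (k - 1) (Function.update mu i0 0)
            + ∑ i ∈ Finset.univ.erase i0, t * esymm n (k - 1) (Function.update mu i 0) :=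
        (Finset.add_sum_erase _ _ (Finset.mem_univ i0)).symm
      have htot : ∑ i : Fin n, t * esymm n (k - 1) (Function.update mu i 0)
          = t * (((n - (k - 1) : ℕ) : ℝ) * E) := by
        rw [← Finset.mul_sum, hsumE]
      have hcast : ((n - (k - 1) : ℕ) : ℝ) = (n : ℝ) - (k : ℝ) + 1 := by
        rw [Nat.cast_sub (by omega), Nat.cast_sub (by omega)]
        push_cast
        ring
      rw [hupd, ← hE] at hsplit2
      have hmain : (k : ℝ) * esymm n k mu ≤ t * ((n : ℝ) - (k : ℝ)) * E := by
        have := hdrop ▸ hsum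
        rw [hcast] at htot
        nlinarith [hbound, hsplit2, htot, this, hEpos, hpos]
      nlinarith [hmain, hsplitk, hEpos, hpos]
  have hnt : (0 : ℝ) < (n : ℝ) * t := by
    have : (0 : ℝ) < (n : ℝ) := by exact_mod_cast hn
    positivity
  refine ⟨hEpos, ?_, ?_⟩
  · rw [div_mul_eq_mul_div, div_le_iff₀ hnt]
    nlinarith [key]
  · rw [div_mul_eq_mul_div, div_mul_eq_mul_div, div_le_iff₀
      (show (0:ℝ) < (n:ℝ) by exact_mod_cast hn)]
    nlinarith [key, hpos, hEpos]
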